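/- The Lie algebra 𝔤 decomposes as 𝔤 = 𝔥 ⊕ 𝔤⁺ with 𝔤⁺ = 𝔤⁺_B + 𝔤⁺_C, where 𝔥 = span{h_1,...,h_n}, 𝔤⁺_B is the Lie subalgebra generated by x_1,...,x_n, and 𝔤⁺_C is the Lie subalgebra generated by x_1,...,x_{n-1},x'_n. In particular [𝔤⁺_B, x'_n] ⊆ 𝔤⁺_B + 𝔤⁺_C and [𝔤⁺_C, x_n] ⊆ 𝔤⁺_B + 𝔤⁺_C. -/

import Mathlib

/-! We work with N = n + 2 vertices (so the paper's `n` is `n + 2`, covering all n ≥ 2).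
Generators: `Sum.inl i` is x_i, `Sum.inr (Sum.inl i)` is h_i, `Sum.inr (Sum.inr ())` is x'_n,
all 0-indexed (the paper's index i corresponds to i - 1). -/

/-- The free complex Lie algebra on the generators x_1,…,x_N, h_1,…,h_N, x'_N. -/
abbrev FL (n : ℕ) : Type :=
  FreeLieAlgebra ℂ (Fin (n + 2) ⊕ (Fin (n + 2) ⊕ Unit))

/-- The generator x_i. -/
noncomputable def Xg {n : ℕ} (i : Fin (n + 2)) : FL n :=
  FreeLieAlgebra.of ℂ (Sum.inl i)

/-- The generator h_i. -/
noncomputable def Hg {n : ℕ} (i : Fin (n + 2)) : FL n :=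
  FreeLieAlgebra.of ℂ (Sum.inr (Sum.inl i))

/-- The generator x'_n. -/
noncomputable def Xg' (n : ℕ) : FL n :=
  FreeLieAlgebra.of ℂ (Sum.inr (Sum.inr ()))

/-- The coefficients of the type-B relations (B2): [h_i,x_j] = aB i j • x_j. -/
def aB (n : ℕ) (i j : Fin (n + 2)) : ℂ :=
  if i = j then 2
  else if i.val = n + 1 ∧ j.val = n then -2
  else if i.val + 1 = j.val ∨ j.val + 1 = i.val then -1
  else 0

/-- The coefficients of the type-C relations (C2): [h'_i,x'_j] = aC i j • x'_j. -/
def aC (n : ℕ) (i j : Fin (n + 2)) : ℂ :=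
  if i = j then 2
  else if i.val = n ∧ j.val = n + 1 then -2
  else if (i.val + 1 = j.val ∨ j.val + 1 = i.val) ∧ j.val ≠ n + 1 then -1
  else 0

/-- The generator x'_i of the type-C Borel: x'_i = x_i for i < N, x'_N = x'_n. -/
noncomputable def xC {n : ℕ} (i : Fin (n + 2)) : FL n :=
  if i.val = n + 1 then Xg' n else Xg i

/-- The generator h'_i of the type-C Borel: h'_i = h_i for i < N, h'_N = (1/2)h_N. -/
noncomputable def hC {n : ℕ} (i : Fin (n + 2)) : FL n :=
  if i.val = n + 1 then (2 : ℂ)⁻¹ • Hg i else Hg i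

/-- The Serre relations (B3) among the x_i (for i ≠ j). -/
noncomputable def serreB {n : ℕ} (i j : Fin (n + 2)) : FL n :=
  if i.val = n + 1 ∧ j.val = n then ⁅Xg i, ⁅Xg i, ⁅Xg i, Xg j⁆⁆⁆
  else if i.val + 1 = j.val ∨ j.val + 1 = i.val then ⁅Xg i, ⁅Xg i, Xg j⁆⁆
  else ⁅Xg i, Xg j⁆

/-- The Serre relations (C3) among the x'_i (for i ≠ j). -/
noncomputable def serreC {n : ℕ} (i j : Fin (n + 2)) : FL n :=
  if i.val = n ∧ j.val = n + 1 then ⁅xC i, ⁅xC i, ⁅xC i, xC j⁆⁆⁆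
  else if (i.val + 1 = j.val ∨ j.val + 1 = i.val) ∧ j.val ≠ n + 1 then ⁅xC i, ⁅xC i, xC j⁆⁆
  else ⁅xC i, xC j⁆

/-- The set of relations (BC1), (BC2), (BC3) of the Lie algebra 𝔤 of type BC⁺. -/
noncomputable def RelBC (n : ℕ) : Set (FL n) :=
  (Set.range fun p : Fin (n + 2) × Fin (n + 2) => ⁅Hg p.1, Hg p.2⁆) ∪
  (Set.range fun p : Fin (n + 2) × Fin (n + 2) =>
    ⁅Hg p.1, Xg p.2⁆ - aB n p.1 p.2 • Xg p.2) ∪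
  (Set.range fun p : {q : Fin (n + 2) × Fin (n + 2) // q.1 ≠ q.2} =>
    serreB p.1.1 p.1.2) ∪
  (Set.range fun p : Fin (n + 2) × Fin (n + 2) => ⁅hC p.1, hC p.2⁆) ∪
  (Set.range fun p : Fin (n + 2) × Fin (n + 2) =>
    ⁅hC p.1, xC p.2⁆ - aC n p.1 p.2 • xC p.2) ∪
  (Set.range fun p : {q : Fin (n + 2) × Fin (n + 2) // q.1 ≠ q.2} =>
    serreC p.1.1 p.1.2) ∪
  {⁅Xg (⟨n + 1, by omega⟩ : Fin (n + 2)), Xg' n⁆,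
   ⁅⁅Xg (⟨n, by omega⟩ : Fin (n + 2)), Xg (⟨n + 1, by omega⟩ : Fin (n + 2))⁆, Xg' n⁆}

/-- The Lie ideal of the free Lie algebra generated by the relations. -/
noncomputable def IdBC (n : ℕ) : LieIdeal ℂ (FL n) :=
  LieSubmodule.lieSpan ℂ (FL n) (RelBC n)

/-- The Lie algebra 𝔤 of type BC⁺, presented by generators and relations. -/
abbrev gBC (n : ℕ) : Type := FL n ⧸ IdBC n

/-- The image of x_i in 𝔤. -/
noncomputable def xg {n : ℕ} (i : Fin (n + 2)) : gBC n :=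
  LieSubmodule.Quotient.mk (N := IdBC n) (Xg i)

/-- The image of h_i in 𝔤. -/
noncomputable def hg {n : ℕ} (i : Fin (n + 2)) : gBC n :=
  LieSubmodule.Quotient.mk (N := IdBC n) (Hg i)

/-- The image of x'_n in 𝔤. -/
noncomputable def xg' (n : ℕ) : gBC n :=
  LieSubmodule.Quotient.mk (N := IdBC n) (Xg' n)

/-- The subspace 𝔥 = span{h_1,…,h_N} of 𝔤. -/
noncomputable def hSpan (n : ℕ) : Submodule ℂ (gBC n) :=
  Submodule.span ℂ (Set.range (hg (n := n)))

/-- The Lie subalgebra 𝔤⁺ of 𝔤 generated by x_1,…,x_N,x'_N. -/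
noncomputable def gPlus (n : ℕ) : LieSubalgebra ℂ (gBC n) :=
  LieSubalgebra.lieSpan ℂ (gBC n) (Set.range (xg (n := n)) ∪ {xg' n})

/-- The Lie subalgebra 𝔤⁺_B of 𝔤 generated by x_1,…,x_N. -/
noncomputable def gPlusB (n : ℕ) : LieSubalgebra ℂ (gBC n) :=
  LieSubalgebra.lieSpan ℂ (gBC n) (Set.range (xg (n := n)))

/-- The Lie subalgebra 𝔤⁺_C of 𝔤 generated by x_1,…,x_{N-1},x'_N. -/
noncomputable def gPlusC (n : ℕ) : LieSubalgebra ℂ (gBC n) :=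
  LieSubalgebra.lieSpan ℂ (gBC n)
    ({y | ∃ i : Fin (n + 2), i.val ≠ n + 1 ∧ y = xg i} ∪ {xg' n})

/-!
𝔥 + 𝔤⁺ is closed under the bracket (𝔥 is abelian and acts diagonally on the generators of 𝔤⁺)
and contains every generator, so it is all of 𝔤. The sum is direct because the Lie map to the
abelian Lie algebra ℂⁿ sending h_i to the i-th basis vector and every x to 0 respects the
relations and kills 𝔤⁺.

Let 𝔞 be generated by x_1, …, x_{n-1}. Then 𝔤⁺_B = 𝔞 + I_B and 𝔤⁺_C = 𝔞 + I_C, where I_B (resp.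
I_C) is the 𝔤⁺_B-submodule generated by x_n (resp. the 𝔤⁺_C-submodule generated by x'_n), so
𝔤⁺_B + 𝔤⁺_C is a subalgebra, hence equal to 𝔤⁺, as soon as [I_B, I_C] = 0. By the Serre relations
(B3) the 𝔞-submodule generated by x_n is spanned by the short root vectors u_0 = x_n,
u_{j+1} = [x_{n-1-j}, u_j], and (BC3) together with [x_i, x'_n] = 0 for i < n - 1 shows that x'_n
centralises all of them. As the centraliser of a K-stable subspace is again K-stable, first
[x_n, I_C] = 0 and then [I_B, I_C] = 0.
-/

open Set

namespace Submodule

variable {R L : Type*} [CommRing R] [LieRing L] [LieAlgebra R L]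

def lieStabilizer (M : Submodule R L) : LieSubalgebra R L where
  carrier := {x | ∀ m ∈ M, ⁅x, m⁆ ∈ M}
  add_mem' hx hy m hm := by rw [add_lie]; exact M.add_mem (hx m hm) (hy m hm)
  zero_mem' m _ := by rw [zero_lie]; exact M.zero_mem
  smul_mem' c _ hx m hm := by rw [smul_lie]; exact M.smul_mem c (hx m hm)
  lie_mem' hx hy m hm := by rw [lie_lie]; exact M.sub_mem (hx _ (hy m hm)) (hy _ (hx m hm))

theorem mem_lieStabilizer_span {S : Set L} {x : L} (h : ∀ s ∈ S, ⁅x, s⁆ ∈ span R S) :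
    x ∈ (span R S).lieStabilizer := by
  intro m hm
  induction hm using span_induction with
  | mem s hs => exact h s hs
  | zero => rw [lie_zero]; exact zero_mem _
  | add a b _ _ ha hb => rw [lie_add]; exact add_mem ha hb
  | smul c a _ ha => rw [lie_smul]; exact smul_mem _ c ha

theorem lie_eq_zero_of_mem_span {S : Set L} {x m : L} (h : ∀ s ∈ S, ⁅x, s⁆ = 0)
    (hm : m ∈ span R S) : ⁅x, m⁆ = 0 :=
  (span_le (p := LinearMap.ker (LieAlgebra.ad R L x))).mpr h hm

theorem lie_mem_of_mem_sup {M₁ M₂ N₁ N₂ P : Submodule R L} {x y : L}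
    (hx : x ∈ M₁ ⊔ M₂) (hy : y ∈ N₁ ⊔ N₂)
    (h₁₁ : ∀ a ∈ M₁, ∀ b ∈ N₁, ⁅a, b⁆ ∈ P) (h₁₂ : ∀ a ∈ M₁, ∀ b ∈ N₂, ⁅a, b⁆ ∈ P)
    (h₂₁ : ∀ a ∈ M₂, ∀ b ∈ N₁, ⁅a, b⁆ ∈ P) (h₂₂ : ∀ a ∈ M₂, ∀ b ∈ N₂, ⁅a, b⁆ ∈ P) :
    ⁅x, y⁆ ∈ P := by
  obtain ⟨a₁, ha₁, a₂, ha₂, rfl⟩ := mem_sup.mp hx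
  obtain ⟨b₁, hb₁, b₂, hb₂, rfl⟩ := mem_sup.mp hy
  rw [add_lie, lie_add, lie_add]
  exact add_mem (add_mem (h₁₁ _ ha₁ _ hb₁) (h₁₂ _ ha₁ _ hb₂))
    (add_mem (h₂₁ _ ha₂ _ hb₁) (h₂₂ _ ha₂ _ hb₂))

end Submodule

namespace LieSubalgebra

variable {R L : Type*} [CommRing R] [LieRing L] [LieAlgebra R L]

theorem toSubmodule_lieSpan_le {S : Set L} {P : Submodule R L}
    (hP : ∀ x ∈ P, ∀ y ∈ P, ⁅x, y⁆ ∈ P) (hS : S ⊆ P) : (lieSpan R L S).toSubmodule ≤ P :=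
  lieSpan_le (K := { toSubmodule := P, lie_mem' := fun hx hy => hP _ hx _ hy }).mpr hS

theorem mem_lieStabilizer_lieSpan {S : Set L} {x : L} (h : ∀ s ∈ S, ⁅x, s⁆ ∈ lieSpan R L S) :
    x ∈ (lieSpan R L S).toSubmodule.lieStabilizer := by
  intro m hm
  induction hm using lieSpan_induction with
  | mem s hs => exact h s hs
  | zero => rw [lie_zero]; exact zero_mem _
  | add a b _ _ ha hb => rw [lie_add]; exact add_mem ha hb
  | smul c a _ ha => rw [lie_smul]; exact Submodule.smul_mem _ c ha
  | lie a b ha hb iha ihb => rw [leibniz_lie]; exact add_mem (lie_mem _ iha hb) (lie_mem _ ha ihb)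

theorem toSubmodule_eq_lieSpan_sup {S : Set L} {y : L} {K : LieSubalgebra R L}
    (hK : K = lieSpan R L (S ∪ {y})) :
    K.toSubmodule = (lieSpan R L S).toSubmodule ⊔ (LieSubmodule.lieSpan R K {y}).toSubmodule := by
  have hSK : lieSpan R L S ≤ K := hK ▸ lieSpan_mono subset_union_left
  have hyK : (LieSubmodule.lieSpan R K {y}).toSubmodule ≤ K.toSubmodule :=
    (LieSubmodule.lieSpan_le (N := K.toLieSubmodule)).mpr
      (singleton_subset_iff.mpr (hK ▸ subset_lieSpan (mem_union_right _ rfl)))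
  refine le_antisymm ?_ (sup_le hSK hyK)
  have h := toSubmodule_lieSpan_le (S := S ∪ {y})
    (P := (lieSpan R L S).toSubmodule ⊔ (LieSubmodule.lieSpan R K {y}).toSubmodule)
    (fun a ha b hb => Submodule.lie_mem_of_mem_sup ha hb
      (fun a ha b hb => Submodule.mem_sup_left (lie_mem _ ha hb))
      (fun a ha b hb => Submodule.mem_sup_right (LieSubmodule.lie_mem _ (x := ⟨a, hSK ha⟩) hb))
      (fun a ha b hb => by
        rw [← lie_skew]
        exact neg_mem (Submodule.mem_sup_right (LieSubmodule.lie_mem _ (x := ⟨b, hSK hb⟩) ha)))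
      (fun a ha b hb => Submodule.mem_sup_right (LieSubmodule.lie_mem _ (x := ⟨a, hyK ha⟩) hb)))
    (union_subset (fun s hs => Submodule.mem_sup_left (subset_lieSpan hs))
      (singleton_subset_iff.mpr (Submodule.mem_sup_right (LieSubmodule.subset_lieSpan rfl))))
  rwa [← hK] at h

end LieSubalgebra

namespace LieSubmodule

variable {R L : Type*} [CommRing R] [LieRing L] [LieAlgebra R L]

theorem lie_eq_zero_of_mem_lieSpan {K : LieSubalgebra R L} {M : Submodule R L}
    (hK : K ≤ M.lieStabilizer) {s : Set L} (hs : ∀ y ∈ s, ∀ m ∈ M, ⁅y, m⁆ = 0) {v m : L}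
    (hv : v ∈ lieSpan R K s) (hm : m ∈ M) : ⁅v, m⁆ = 0 := by
  induction hv using lieSpan_induction generalizing m with
  | mem y hy => exact hs y hy m hm
  | zero => exact zero_lie m
  | add a b _ _ ha hb => rw [add_lie, ha hm, hb hm, add_zero]
  | smul c a _ ha => rw [smul_lie, ha hm, smul_zero]
  | lie k a _ ha =>
    rw [LieSubalgebra.coe_bracket_of_module, lie_lie, ha hm, ha (hK k.2 m hm), lie_zero, sub_zero]

end LieSubmodule

theorem FreeLieAlgebra.lieSpan_range_of (R X : Type*) [CommRing R] :
    LieSubalgebra.lieSpan R (FreeLieAlgebra R X) (range (of R : X → FreeLieAlgebra R X)) = ⊤ := by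
  set K := LieSubalgebra.lieSpan R (FreeLieAlgebra R X) (range (of R : X → FreeLieAlgebra R X))
  let F : FreeLieAlgebra R X →ₗ⁅R⁆ K :=
    lift R fun x => ⟨of R x, LieSubalgebra.subset_lieSpan ⟨x, rfl⟩⟩
  have hF : K.incl.comp F = LieHom.id := hom_ext fun x => by simp [F]
  refine eq_top_iff.mpr fun v _ => ?_
  rw [← LieHom.id_apply (R := R) v, ← hF]
  exact (F v).2

theorem LieSubmodule.Quotient.eq_top_of_lie_mem {R L : Type*} [CommRing R] [LieRing L]
    [LieAlgebra R L]
    {I : LieIdeal R L} {S : Set L} (hS : LieSubalgebra.lieSpan R L S = ⊤) {P : Submodule R (L ⧸ I)}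
    (hP : ∀ x ∈ P, ∀ y ∈ P, ⁅x, y⁆ ∈ P) (hSP : ∀ s ∈ S, (mk s : L ⧸ I) ∈ P) : P = ⊤ := by
  have h := LieSubalgebra.toSubmodule_lieSpan_le (P := P.comap (I : Submodule R L).mkQ)
    (fun x hx y hy => hP _ hx _ hy) hSP
  rw [hS] at h
  refine eq_top_iff.mpr fun v _ => ?_
  obtain ⟨w, rfl⟩ := Submodule.Quotient.mk_surjective _ v
  exact h (Submodule.mem_top (x := w))

section Serre

variable {L : Type*} [LieRing L]

theorem lie_lie_lie_eq_zero_of_serre {a b u : L} (hau : ⁅a, u⁆ = 0) (hab : ⁅a, ⁅a, b⁆⁆ = 0) :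
    ⁅a, ⁅a, ⁅b, u⁆⁆⁆ = 0 := by
  have h : ⁅a, ⁅b, u⁆⁆ = ⁅⁅a, b⁆, u⁆ := by rw [leibniz_lie, hau, lie_zero, add_zero]
  rw [h, leibniz_lie, hab, hau, zero_lie, lie_zero, add_zero]

theorem lie_lie_lie_eq_zero_of_serre' [IsAddTorsionFree L] {a b u : L} (hau : ⁅a, u⁆ = 0)
    (hbu : ⁅b, ⁅b, u⁆⁆ = 0) (hba : ⁅b, ⁅b, a⁆⁆ = 0) : ⁅b, ⁅a, ⁅b, u⁆⁆⁆ = 0 := by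
  have h : ⁅b, ⁅a, ⁅b, u⁆⁆⁆ = -⁅b, ⁅a, ⁅b, u⁆⁆⁆ :=
    calc ⁅b, ⁅a, ⁅b, u⁆⁆⁆ = ⁅⁅b, a⁆, ⁅b, u⁆⁆ := by rw [leibniz_lie b a, hbu, lie_zero, add_zero]
      _ = ⁅b, ⁅⁅b, a⁆, u⁆⁆ := by
        rw [leibniz_lie ⁅b, a⁆ b u, ← lie_skew ⁅b, a⁆ b, hba, neg_zero, zero_lie, zero_add]
      _ = -⁅b, ⁅a, ⁅b, u⁆⁆⁆ := by rw [lie_lie, hau, lie_zero, zero_sub, lie_neg]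
  rwa [self_eq_neg] at h

def lieChain (a : ℕ → L) (y : L) : ℕ → L
  | 0 => y
  | j + 1 => ⁅a j, lieChain a y j⁆

variable {a : ℕ → L} {y : L}

theorem lie_lieChain_succ_eq_zero (hserre' : ∀ i, ⁅a (i + 1), ⁅a (i + 1), a i⁆⁆ = 0)
    (hy' : ⁅a 0, ⁅a 0, y⁆⁆ = 0) {j : ℕ} (hj : ∀ i < j, ∀ k ≠ i, ⁅a k, lieChain a y i⁆ = 0) :
    ⁅a j, lieChain a y (j + 1)⁆ = 0 :=
  match j with
  | 0 => hy'
  | j + 1 => lie_lie_lie_eq_zero_of_serre (hj j j.lt_succ_self (j + 1) j.succ_ne_self) (hserre' j)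

theorem lie_lieChain_eq_zero [IsAddTorsionFree L] (hfar : ∀ i j, i + 2 ≤ j → ⁅a i, a j⁆ = 0)
    (hserre : ∀ i, ⁅a i, ⁅a i, a (i + 1)⁆⁆ = 0) (hserre' : ∀ i, ⁅a (i + 1), ⁅a (i + 1), a i⁆⁆ = 0)
    (hy : ∀ i, ⁅a (i + 1), y⁆ = 0) (hy' : ⁅a 0, ⁅a 0, y⁆⁆ = 0) (j : ℕ) :
    ∀ k ≠ j, ⁅a k, lieChain a y j⁆ = 0 := by
  induction j using Nat.strong_induction_on with
  | _ j ih =>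
  intro k hkj
  match j, k with
  | 0, 0 => exact absurd rfl hkj
  | 0, k + 1 => exact hy k
  | j + 1, k =>
    by_cases hk : k = j
    · subst hk
      exact lie_lieChain_succ_eq_zero hserre' hy' fun i hi => ih i (by omega)
    by_cases hk' : k + 1 = j
    · subst hk'
      exact lie_lie_lie_eq_zero_of_serre' (ih k (by omega) (k + 1) (by omega))
        (lie_lieChain_succ_eq_zero hserre' hy' fun i hi => ih i (by omega)) (hserre k)
    have hkj' : ⁅a k, a j⁆ = 0 := by
      rcases Nat.lt_or_gt_of_ne hk with h | h
      · exact hfar k j (by omega)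
      · rw [← lie_skew, hfar j k (by omega), neg_zero]
    show ⁅a k, ⁅a j, lieChain a y j⁆⁆ = 0
    rw [leibniz_lie, hkj', ih j (by omega) k hk, zero_lie, lie_zero, add_zero]

end Serre

section Relations

variable {n : ℕ}

theorem mk'_eq_zero_of_mem_relBC {r : FL n} (hr : r ∈ RelBC n) :
    LieSubmodule.Quotient.mk' (IdBC n) r = 0 :=
  (LieSubmodule.Quotient.mk_eq_zero _).mpr (LieSubmodule.subset_lieSpan hr)

theorem hg_lie_hg (i j : Fin (n + 2)) : ⁅hg i, hg j⁆ = 0 :=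
  mk'_eq_zero_of_mem_relBC (by simp [RelBC])

theorem hg_lie_xg (i j : Fin (n + 2)) : ⁅hg i, xg j⁆ = aB n i j • xg j := by
  have h := mk'_eq_zero_of_mem_relBC (r := ⁅Hg i, Xg j⁆ - aB n i j • Xg j) (by simp [RelBC])
  rwa [map_sub, map_smul, sub_eq_zero] at h

theorem hg_lie_xg' (i : Fin (n + 2)) : ∃ c : ℂ, ⁅hg i, xg' n⁆ = c • xg' n := by
  have h := mk'_eq_zero_of_mem_relBC (n := n)
    (r := ⁅hC i, xC (Fin.last _)⁆ - aC n i (Fin.last _) • xC (Fin.last _)) (by simp [RelBC])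
  rw [map_sub, map_smul, sub_eq_zero] at h
  simp only [hC, xC, Fin.val_last, if_true] at h
  split_ifs at h
  · refine ⟨2 * aC n i (Fin.last _), ?_⟩
    rwa [smul_lie, map_smul, inv_smul_eq_iff₀ two_ne_zero, smul_smul] at h
  · exact ⟨_, h⟩

theorem serreB_mem_relBC {i j : Fin (n + 2)} (hij : i ≠ j) : serreB i j ∈ RelBC n :=
  .inl (.inl (.inl (.inl (.inr ⟨⟨(i, j), hij⟩, rfl⟩))))

theorem serreC_mem_relBC {i j : Fin (n + 2)} (hij : i ≠ j) : serreC i j ∈ RelBC n :=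
  .inl (.inr ⟨⟨(i, j), hij⟩, rfl⟩)

theorem xg_lie_xg_of_far {i j : Fin (n + 2)} (hfar : i.val + 2 ≤ j.val ∨ j.val + 2 ≤ i.val) :
    ⁅xg i, xg j⁆ = 0 := by
  have h := mk'_eq_zero_of_mem_relBC (serreB_mem_relBC (i := i) (j := j) (by rintro rfl; omega))
  rwa [serreB, if_neg (by omega), if_neg (by omega)] at h

theorem xg_lie_xg_lie_xg {i j : Fin (n + 2)} (hadj : i.val + 1 = j.val ∨ j.val + 1 = i.val)
    (hi : i.val ≠ n + 1) : ⁅xg i, ⁅xg i, xg j⁆⁆ = 0 := by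
  have h := mk'_eq_zero_of_mem_relBC (serreB_mem_relBC (i := i) (j := j) (by rintro rfl; omega))
  rwa [serreB, if_neg (by omega), if_pos hadj] at h

theorem xg_lie_xg' {i : Fin (n + 2)} (hi : i.val < n) : ⁅xg i, xg' n⁆ = 0 := by
  have h := mk'_eq_zero_of_mem_relBC
    (serreC_mem_relBC (i := i) (j := Fin.last (n + 1)) (by rintro rfl; simp at hi))
  have hi' : i.val ≠ n + 1 := by omega
  rwa [serreC, if_neg (by simp [hi.ne]), if_neg (by simp), xC, xC, if_neg hi',
    if_pos (Fin.val_last _)] at h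

theorem xg_last_lie_xg' : ⁅xg (Fin.last (n + 1)), xg' n⁆ = 0 :=
  mk'_eq_zero_of_mem_relBC (n := n) (by unfold RelBC; exact .inr (.inl rfl))

theorem lie_xg_last_lie_xg' :
    ⁅⁅xg (⟨n, by omega⟩ : Fin (n + 2)), xg (Fin.last (n + 1))⁆, xg' n⁆ = 0 :=
  mk'_eq_zero_of_mem_relBC (n := n) (by unfold RelBC; exact .inr (.inr rfl))

end Relations

section Chain

variable {n : ℕ}

instance : IsAddTorsionFree (gBC n) := .of_isTorsionFree ℂ _

-- `x_n, x_{n-1}, …, x_0` followed by zeros, so that `lie_lieChain_eq_zero` applies at every index.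
noncomputable def xgRev (n k : ℕ) : gBC n :=
  if hk : k ≤ n then xg ⟨n - k, by omega⟩ else 0

theorem xgRev_of_le {k : ℕ} (hk : k ≤ n) : xgRev n k = xg ⟨n - k, by omega⟩ := dif_pos hk

theorem xgRev_of_lt {k : ℕ} (hk : n < k) : xgRev n k = 0 := dif_neg (by omega)

-- The short root vectors `⁅x_{n+1-j}, ⁅…, ⁅x_n, x_{n+1}⁆⁆⁆`.
noncomputable def rootVec (n : ℕ) : ℕ → gBC n := lieChain (xgRev n) (xg (Fin.last (n + 1)))

theorem xgRev_lie_rootVec {k j : ℕ} (hkj : k ≠ j) : ⁅xgRev n k, rootVec n j⁆ = 0 := by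
  refine lie_lieChain_eq_zero ?_ ?_ ?_ ?_ ?_ j k hkj
  · intro i j hij
    rcases le_or_gt j n with hj | hj
    · rw [xgRev_of_le (by omega), xgRev_of_le hj]
      exact xg_lie_xg_of_far (by simp; omega)
    · rw [xgRev_of_lt hj, lie_zero]
  · intro i
    rcases le_or_gt (i + 1) n with hi | hi
    · rw [xgRev_of_le (by omega), xgRev_of_le hi]
      exact xg_lie_xg_lie_xg (by simp; omega) (by simp; omega)
    · rw [xgRev_of_lt hi, lie_zero, lie_zero]
  · intro i
    rcases le_or_gt (i + 1) n with hi | hi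
    · rw [xgRev_of_le hi, xgRev_of_le (by omega : i ≤ n)]
      exact xg_lie_xg_lie_xg (by simp; omega) (by simp; omega)
    · rw [xgRev_of_lt hi, zero_lie]
  · intro i
    rcases le_or_gt (i + 1) n with hi | hi
    · rw [xgRev_of_le hi]
      exact xg_lie_xg_of_far (by simp; omega)
    · rw [xgRev_of_lt hi, zero_lie]
  · rw [xgRev_of_le n.zero_le]
    exact xg_lie_xg_lie_xg (by simp) (by simp)

theorem xg_lie_rootVec_mem_span {i : Fin (n + 2)} (hi : i.val ≤ n) (j : ℕ) :
    ⁅xg i, rootVec n j⁆ ∈ Submodule.span ℂ (Set.range (rootVec n)) := by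
  have hxi : xg i = xgRev n (n - i) := by
    rw [xgRev_of_le (by omega)]
    congr
    ext
    simp only
    omega
  rw [hxi]
  by_cases h : n - i = j
  · rw [h]
    exact Submodule.subset_span ⟨j + 1, rfl⟩
  · rw [xgRev_lie_rootVec h]
    exact zero_mem _

theorem xgRev_succ_lie_xg' (k : ℕ) : ⁅xgRev n (k + 1), xg' n⁆ = 0 := by
  rcases le_or_gt (k + 1) n with hk | hk
  · rw [xgRev_of_le hk]
    exact xg_lie_xg' (by simp; omega)
  · rw [xgRev_of_lt hk, zero_lie]

theorem rootVec_lie_xg' : ∀ j, ⁅rootVec n j, xg' n⁆ = 0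
  | 0 => xg_last_lie_xg'
  | 1 => lie_xg_last_lie_xg'
  | j + 2 => by
    show ⁅⁅xgRev n (j + 1), rootVec n (j + 1)⁆, xg' n⁆ = 0
    rw [lie_lie, rootVec_lie_xg' (j + 1), xgRev_succ_lie_xg', lie_zero, lie_zero, sub_zero]

theorem xg'_lie_eq_zero_of_mem_span {m : gBC n}
    (hm : m ∈ Submodule.span ℂ (Set.range (rootVec n))) : ⁅xg' n, m⁆ = 0 :=
  Submodule.lie_eq_zero_of_mem_span (by
    rintro _ ⟨j, rfl⟩
    rw [← lie_skew, rootVec_lie_xg', neg_zero]) hm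

theorem gPlusC_le_lieStabilizer :
    gPlusC n ≤ (Submodule.span ℂ (Set.range (rootVec n))).lieStabilizer := by
  refine LieSubalgebra.lieSpan_le.mpr (Set.union_subset ?_ ?_)
  · rintro _ ⟨i, hi, rfl⟩
    exact Submodule.mem_lieStabilizer_span fun _ ⟨j, hj⟩ =>
      hj ▸ xg_lie_rootVec_mem_span (by omega) j
  · rintro _ rfl m hm
    rw [xg'_lie_eq_zero_of_mem_span hm]
    exact zero_mem _

end Chain

section Decomposition

variable {n : ℕ}

noncomputable def gPlusA (n : ℕ) : LieSubalgebra ℂ (gBC n) :=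
  LieSubalgebra.lieSpan ℂ (gBC n) {y | ∃ i : Fin (n + 2), i.val ≠ n + 1 ∧ y = xg i}

noncomputable def idealB (n : ℕ) : LieSubmodule ℂ (gPlusB n) (gBC n) :=
  LieSubmodule.lieSpan ℂ (gPlusB n) {xg (Fin.last (n + 1))}

noncomputable def idealC (n : ℕ) : LieSubmodule ℂ (gPlusC n) (gBC n) :=
  LieSubmodule.lieSpan ℂ (gPlusC n) {xg' n}

theorem toSubmodule_gPlusB :
    (gPlusB n).toSubmodule = (gPlusA n).toSubmodule ⊔ (idealB n).toSubmodule := by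
  refine LieSubalgebra.toSubmodule_eq_lieSpan_sup (congrArg _ ?_)
  ext v
  constructor
  · rintro ⟨i, rfl⟩
    by_cases hi : i.val = n + 1
    · exact .inr (congrArg xg (Fin.ext hi))
    · exact .inl ⟨i, hi, rfl⟩
  · rintro (⟨i, -, rfl⟩ | rfl) <;> exact ⟨_, rfl⟩

theorem toSubmodule_gPlusC :
    (gPlusC n).toSubmodule = (gPlusA n).toSubmodule ⊔ (idealC n).toSubmodule :=
  LieSubalgebra.toSubmodule_eq_lieSpan_sup rfl

theorem xg_last_lie_idealC {v : gBC n} (hv : v ∈ idealC n) : ⁅xg (Fin.last (n + 1)), v⁆ = 0 := by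
  rw [← lie_skew, neg_eq_zero]
  refine LieSubmodule.lie_eq_zero_of_mem_lieSpan gPlusC_le_lieStabilizer ?_ hv
    (Submodule.subset_span ⟨0, rfl⟩)
  rintro _ rfl m hm
  exact xg'_lie_eq_zero_of_mem_span hm

theorem idealB_lie_idealC {u v : gBC n} (hu : u ∈ idealB n) (hv : v ∈ idealC n) : ⁅u, v⁆ = 0 := by
  refine LieSubmodule.lie_eq_zero_of_mem_lieSpan (M := (idealC n).toSubmodule) ?_ ?_ hu hv
  · refine LieSubalgebra.lieSpan_le.mpr ?_
    rintro _ ⟨i, rfl⟩ m hm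
    by_cases hi : i.val = n + 1
    · rw [show i = Fin.last (n + 1) from Fin.ext hi, xg_last_lie_idealC hm]
      exact zero_mem _
    · exact (idealC n).lie_mem (x := ⟨xg i, LieSubalgebra.subset_lieSpan (.inl ⟨i, hi, rfl⟩)⟩) hm
  · rintro _ rfl m hm
    exact xg_last_lie_idealC hm

theorem lie_mem_gPlusB_sup_gPlusC {b c : gBC n} (hb : b ∈ gPlusB n) (hc : c ∈ gPlusC n) :
    ⁅b, c⁆ ∈ (gPlusB n).toSubmodule ⊔ (gPlusC n).toSubmodule := by
  have hAB : (gPlusA n).toSubmodule ≤ (gPlusB n).toSubmodule := toSubmodule_gPlusB ▸ le_sup_left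
  have hAC : (gPlusA n).toSubmodule ≤ (gPlusC n).toSubmodule := toSubmodule_gPlusC ▸ le_sup_left
  have hIB : (idealB n).toSubmodule ≤ (gPlusB n).toSubmodule := toSubmodule_gPlusB ▸ le_sup_right
  have hIC : (idealC n).toSubmodule ≤ (gPlusC n).toSubmodule := toSubmodule_gPlusC ▸ le_sup_right
  refine Submodule.lie_mem_of_mem_sup (by rw [← toSubmodule_gPlusB]; exact hb)
    (by rw [← toSubmodule_gPlusC]; exact hc) ?_ ?_ ?_ ?_
  · exact fun a ha a' ha' => Submodule.mem_sup_left (hAB ((gPlusA n).lie_mem ha ha'))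
  · exact fun a ha v hv =>
      Submodule.mem_sup_right (hIC ((idealC n).lie_mem (x := ⟨a, hAC ha⟩) hv))
  · intro u hu a ha
    rw [← lie_skew]
    exact neg_mem (Submodule.mem_sup_left (hIB ((idealB n).lie_mem (x := ⟨a, hAB ha⟩) hu)))
  · intro u hu v hv
    rw [idealB_lie_idealC hu hv]
    exact zero_mem _

theorem toSubmodule_gPlus :
    (gPlus n).toSubmodule = (gPlusB n).toSubmodule ⊔ (gPlusC n).toSubmodule := by
  refine le_antisymm (LieSubalgebra.toSubmodule_lieSpan_le ?_ ?_) (sup_le ?_ ?_)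
  · intro x hx y hy
    refine Submodule.lie_mem_of_mem_sup hx hy
      (fun a ha b hb => Submodule.mem_sup_left ((gPlusB n).lie_mem ha hb))
      (fun a ha b hb => lie_mem_gPlusB_sup_gPlusC ha hb)
      (fun a ha b hb => ?_)
      (fun a ha b hb => Submodule.mem_sup_right ((gPlusC n).lie_mem ha hb))
    rw [← lie_skew]
    exact neg_mem (lie_mem_gPlusB_sup_gPlusC hb ha)
  · rintro _ (⟨i, rfl⟩ | rfl)
    · exact Submodule.mem_sup_left (LieSubalgebra.subset_lieSpan ⟨i, rfl⟩)
    · exact Submodule.mem_sup_right (LieSubalgebra.subset_lieSpan (.inr rfl))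
  · exact LieSubalgebra.lieSpan_mono Set.subset_union_left
  · refine LieSubalgebra.lieSpan_mono (Set.union_subset_union_left _ ?_)
    rintro _ ⟨i, -, rfl⟩
    exact ⟨i, rfl⟩

end Decomposition

section Cartan

variable {n : ℕ}

theorem hSpan_lie_hSpan {a b : gBC n} (ha : a ∈ hSpan n) (hb : b ∈ hSpan n) : ⁅a, b⁆ = 0 := by
  have hhb : ∀ i, ⁅hg i, b⁆ = 0 := fun i =>
    Submodule.lie_eq_zero_of_mem_span (by rintro _ ⟨j, rfl⟩; exact hg_lie_hg i j) hb
  rw [← lie_skew, neg_eq_zero]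
  exact Submodule.lie_eq_zero_of_mem_span
    (by rintro _ ⟨i, rfl⟩; rw [← lie_skew, hhb, neg_zero]) ha

theorem hSpan_le_lieStabilizer_gPlus :
    hSpan n ≤ (gPlus n).toSubmodule.lieStabilizer.toSubmodule := by
  refine Submodule.span_le.mpr ?_
  rintro _ ⟨i, rfl⟩
  refine LieSubalgebra.mem_lieStabilizer_lieSpan ?_
  rintro _ (⟨j, rfl⟩ | rfl)
  · rw [hg_lie_xg]
    exact Submodule.smul_mem _ _ (LieSubalgebra.subset_lieSpan (.inl ⟨j, rfl⟩))
  · obtain ⟨c, hc⟩ := hg_lie_xg' (n := n) i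
    rw [hc]
    exact Submodule.smul_mem _ _ (LieSubalgebra.subset_lieSpan (.inr rfl))

theorem hSpan_sup_gPlus : hSpan n ⊔ (gPlus n).toSubmodule = ⊤ := by
  refine LieSubmodule.Quotient.eq_top_of_lie_mem (FreeLieAlgebra.lieSpan_range_of ℂ _) ?_ ?_
  · intro x hx y hy
    refine Submodule.lie_mem_of_mem_sup hx hy
      (fun a ha b hb => by rw [hSpan_lie_hSpan ha hb]; exact zero_mem _)
      (fun a ha b hb => Submodule.mem_sup_right (hSpan_le_lieStabilizer_gPlus ha b hb))
      (fun a ha b hb => ?_)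
      (fun a ha b hb => Submodule.mem_sup_right ((gPlus n).lie_mem ha hb))
    rw [← lie_skew]
    exact neg_mem (Submodule.mem_sup_right (hSpan_le_lieStabilizer_gPlus hb a ha))
  · rintro _ ⟨i | i | -, rfl⟩
    · exact Submodule.mem_sup_right (LieSubalgebra.subset_lieSpan (.inl ⟨i, rfl⟩))
    · exact Submodule.mem_sup_left (Submodule.subset_span ⟨i, rfl⟩)
    · exact Submodule.mem_sup_right (LieSubalgebra.subset_lieSpan (.inr rfl))

end Cartan

section Abelianization

-- Makes the commutative ring `Fin (n + 2) → ℂ` an abelian Lie algebra.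
attribute [local instance 100] LieRing.ofAssociativeRing

variable {n : ℕ}

noncomputable def cartanCoord (n : ℕ) : FL n →ₗ⁅ℂ⁆ (Fin (n + 2) → ℂ) :=
  FreeLieAlgebra.lift ℂ (Sum.elim 0 (Sum.elim (fun i => Pi.single i 1) 0))

theorem cartanCoord_lie (a b : FL n) : cartanCoord n ⁅a, b⁆ = 0 := by
  rw [LieHom.map_lie, LieRing.of_associative_ring_bracket, mul_comm, sub_self]

theorem cartanCoord_Xg (i : Fin (n + 2)) : cartanCoord n (Xg i) = 0 :=
  FreeLieAlgebra.lift_of_apply _ _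

theorem cartanCoord_xC (i : Fin (n + 2)) : cartanCoord n (xC i) = 0 := by
  unfold xC
  split_ifs <;> exact FreeLieAlgebra.lift_of_apply _ _

theorem idBC_le_ker_cartanCoord : IdBC n ≤ (cartanCoord n).ker := by
  refine LieSubmodule.lieSpan_le.mpr ?_
  intro r hr
  rw [SetLike.mem_coe, LieHom.mem_ker]
  simp only [RelBC, Set.mem_union, Set.mem_range, Set.mem_insert_iff,
    Set.mem_singleton_iff] at hr
  rcases hr with
    (((((⟨_, rfl⟩ | ⟨_, rfl⟩) | ⟨_, rfl⟩) | ⟨_, rfl⟩) | ⟨_, rfl⟩) | ⟨_, rfl⟩) | rfl | rfl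
  · exact cartanCoord_lie _ _
  · rw [map_sub, map_smul, cartanCoord_lie, cartanCoord_Xg, smul_zero, sub_zero]
  · unfold serreB
    split_ifs <;> exact cartanCoord_lie _ _
  · exact cartanCoord_lie _ _
  · rw [map_sub, map_smul, cartanCoord_lie, cartanCoord_xC, smul_zero, sub_zero]
  · unfold serreC
    split_ifs <;> exact cartanCoord_lie _ _
  all_goals exact cartanCoord_lie _ _

noncomputable def cartanCoordQ (n : ℕ) : gBC n →ₗ[ℂ] (Fin (n + 2) → ℂ) :=
  (IdBC n).toSubmodule.liftQ (cartanCoord n).toLinearMap fun _ hx => idBC_le_ker_cartanCoord hx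

theorem toSubmodule_gPlus_le_ker : (gPlus n).toSubmodule ≤ LinearMap.ker (cartanCoordQ n) := by
  refine LieSubalgebra.toSubmodule_lieSpan_le ?_ ?_
  · intro x _ y _
    obtain ⟨a, rfl⟩ := Submodule.Quotient.mk_surjective _ x
    obtain ⟨b, rfl⟩ := Submodule.Quotient.mk_surjective _ y
    exact cartanCoord_lie a b
  · rintro _ (⟨i, rfl⟩ | rfl)
    · exact cartanCoord_Xg i
    · exact FreeLieAlgebra.lift_of_apply _ _

theorem cartanCoordQ_sum (c : Fin (n + 2) → ℂ) : cartanCoordQ n (∑ i, c i • hg i) = c := by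
  have h : ∀ i, cartanCoordQ n (hg i) = Pi.single i 1 := fun i => FreeLieAlgebra.lift_of_apply _ _
  ext j
  simp [h, Pi.single_apply]

theorem hSpan_inf_gPlus : hSpan n ⊓ (gPlus n).toSubmodule = ⊥ := by
  refine eq_bot_iff.mpr fun v ⟨hvh, hvg⟩ => ?_
  obtain ⟨c, rfl⟩ := (Submodule.mem_span_range_iff_exists_fun ℂ).mp hvh
  have hc : c = 0 := (cartanCoordQ_sum c).symm.trans (toSubmodule_gPlus_le_ker hvg)
  simp [hc]

end Abelianization

/-- 𝔤 = 𝔥 ⊕ 𝔤⁺ and 𝔤⁺ = 𝔤⁺_B + 𝔤⁺_C; in particular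
[𝔤⁺_B, x'_N] ⊆ 𝔤⁺_B + 𝔤⁺_C and [𝔤⁺_C, x_N] ⊆ 𝔤⁺_B + 𝔤⁺_C. -/
theorem stmt_9 (n : ℕ) :
    hSpan n ⊔ (gPlus n).toSubmodule = ⊤ ∧
    hSpan n ⊓ (gPlus n).toSubmodule = ⊥ ∧
    (gPlus n).toSubmodule = (gPlusB n).toSubmodule ⊔ (gPlusC n).toSubmodule ∧
    (∀ y ∈ gPlusB n,
      ⁅y, xg' n⁆ ∈ (gPlusB n).toSubmodule ⊔ (gPlusC n).toSubmodule) ∧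
    (∀ y ∈ gPlusC n,
      ⁅y, xg (⟨n + 1, by omega⟩ : Fin (n + 2))⁆ ∈
        (gPlusB n).toSubmodule ⊔ (gPlusC n).toSubmodule) := by
  refine ⟨hSpan_sup_gPlus, hSpan_inf_gPlus, toSubmodule_gPlus, fun y hy => ?_, fun y hy => ?_⟩
  · exact lie_mem_gPlusB_sup_gPlusC hy (LieSubalgebra.subset_lieSpan (.inr rfl))
  · rw [← lie_skew]
    exact neg_mem (lie_mem_gPlusB_sup_gPlusC (LieSubalgebra.subset_lieSpan ⟨_, rfl⟩) hy)
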